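/- Let Λ be a Bedford–McMullen carpet with non-uniform vertical fibres. Let t ∈ (t̲, max_ĵ log N_ĵ) and s = t/log n + (log M)/(log m). Then lim_{J→∞} (1/J)·log #{ ī ∈ {1,…,M}^J : ψ_{ī|J}(s) > 1 } = H(Q*_t). -/

import Mathlib

open Filter Set MeasureTheory
open scoped ENNReal NNReal Topology

noncomputable section

/-- The data defining a Bedford–McMullen carpet: an `m × n` grid with `n > m ≥ 2` and a
nonempty set `A` of selected rectangles, with more than one nonempty column. -/
structure BMData where
  m : ℕ
  n : ℕ
  two_le_m : 2 ≤ m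
  m_lt_n : m < n
  A : Finset (Fin m × Fin n)
  A_nonempty : A.Nonempty
  one_lt_cols : 1 < (A.image Prod.fst).card

namespace BMData

variable (C : BMData)

/-- The affine contraction `f_{(i,j)}` associated to a selected rectangle `(i, j) ∈ A`
(with the grid indexed from `0` rather than from `1`). -/
def map (p : Fin C.m × Fin C.n) (x : ℝ × ℝ) : ℝ × ℝ :=
  (x.1 / C.m + (p.1 : ℝ) / C.m, x.2 / C.n + (p.2 : ℝ) / C.n)

/-- `Λ` is the attractor of the iterated function system: the unique nonempty compact set
satisfying `Λ = ⋃_{p ∈ A} f_p(Λ)`. -/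
def IsAttractor (Λ : Set (ℝ × ℝ)) : Prop :=
  Λ.Nonempty ∧ IsCompact Λ ∧ Λ = ⋃ p ∈ C.A, C.map p '' Λ

/-- The (finite set of) nonempty columns. -/
def cols : Finset (Fin C.m) := C.A.image Prod.fst

/-- `M`, the number of nonempty columns. -/
def M : ℕ := C.cols.card

/-- `N`, the total number of maps. -/
def N : ℕ := C.A.card

/-- The number `N_î` of maps in column `î`. -/
def colCount (i : Fin C.m) : ℕ := (C.A.filter fun p => p.1 = i).card

/-- Non-uniform vertical fibres: the column counts are not all equal. -/
def NonUniform : Prop :=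
  ∃ i ∈ C.cols, ∃ j ∈ C.cols, C.colCount i ≠ C.colCount j

/-- `γ = log n / log m`. -/
def gamma : ℝ := Real.log C.n / Real.log C.m

/-- `t̲ = (1/M) ∑_ĵ log N_ĵ`. -/
def tLow : ℝ := (1 / (C.M : ℝ)) * ∑ j ∈ C.cols, Real.log (C.colCount j)

/-- `t̄ = ∑_ĵ (N_ĵ/N) log N_ĵ`. -/
def tUp : ℝ := ∑ j ∈ C.cols, ((C.colCount j : ℝ) / (C.N : ℝ)) * Real.log (C.colCount j)

/-- The large deviations rate function
`I(t) = sup_λ (λt − log((1/M) ∑_ĵ N_ĵ^λ))`. -/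
def rate (t : ℝ) : ℝ :=
  ⨆ l : ℝ, (l * t - Real.log ((1 / (C.M : ℝ)) * ∑ j ∈ C.cols, (C.colCount j : ℝ) ^ l))

/-- The map `T_s(t) = (s − log M/log m)·log n + γ·I(t)`. -/
def T (s t : ℝ) : ℝ :=
  (s - Real.log C.M / Real.log C.m) * Real.log C.n + C.gamma * C.rate t

/-- The sequence `t_ℓ(s)`, shifted so that `t_L(s) = tseq s (L - 1)`:
`tseq s 0 = t_1(s) = (s − log M/log m)·log n` and `tseq s (k+1) = T_s (tseq s k)`. -/
def tseq (s : ℝ) : ℕ → ℝ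
  | 0 => (s - Real.log C.M / Real.log C.m) * Real.log C.n
  | k + 1 => C.T s (tseq s k)

/-- The Hausdorff dimension of the carpet (Bedford–McMullen formula). -/
def dimH : ℝ :=
  (1 / Real.log C.m) *
    Real.log (∑ j ∈ C.cols, (C.colCount j : ℝ) ^ (Real.log C.m / Real.log C.n))

/-- The box dimension of the carpet (Bedford–McMullen formula). -/
def dimB : ℝ :=
  Real.log C.N / Real.log C.n + (1 - Real.log C.m / Real.log C.n) * (Real.log C.M / Real.log C.m)

/-- `(M₀, Ñ_1 > ⋯ > Ñ_{M₀}, R_1, …, R_{M₀})` are the parameters of the carpet: `Ñ` lists the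
distinct values among the column counts in strictly decreasing order, and `R î` is the number
of nonempty columns whose count equals `Ñ î`. -/
def HasParams (M0 : ℕ) (Nt R : Fin M0 → ℕ) : Prop :=
  (∀ i j : Fin M0, i < j → Nt j < Nt i) ∧
  (∀ i : Fin M0, 0 < R i) ∧
  (∀ c ∈ C.cols, ∃ i : Fin M0, C.colCount c = Nt i) ∧
  (∀ i : Fin M0, R i = (C.cols.filter fun c => C.colCount c = Nt i).card)

/-- `ψ_{ī|k}(s) = M^{kγ}·n^{−sk}·∏_{ℓ=1}^k N_{i_ℓ}` for a word `ī` of length `J` over the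
alphabet of nonempty columns. -/
def psi (s : ℝ) {J : ℕ} (w : Fin J → {c // c ∈ C.cols}) (k : ℕ) : ℝ :=
  (C.M : ℝ) ^ ((k : ℝ) * C.gamma) * (C.n : ℝ) ^ (-(s * (k : ℝ))) *
    ∏ l ∈ Finset.univ.filter (fun l : Fin J => (l : ℕ) < k), (C.colCount (w l).1 : ℝ)

/-- `Ψ_J(s) = ∑_{ī} min_{0 ≤ k ≤ J} ψ_{ī|k}(s)`. -/
def Psi (J : ℕ) (s : ℝ) : ℝ :=
  ∑ w : Fin J → {c // c ∈ C.cols}, ⨅ k : Fin (J + 1), C.psi s w (k : ℕ)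

open Classical in
/-- `∑_{ī : ψ_{ī|J}(s) ≤ 1} ψ_{ī|J}(s)`. -/
def psiSumLe (s : ℝ) (J : ℕ) : ℝ :=
  ∑ w : Fin J → {c // c ∈ C.cols}, if C.psi s w J ≤ 1 then C.psi s w J else 0

/-- `H(Q*_t)`: the maximal entropy of a probability vector `q` on the nonempty columns
subject to `∑_ĵ q_ĵ log N_ĵ = t`. -/
def entMax (t : ℝ) : ℝ :=
  sSup { h : ℝ | ∃ q : Fin C.m → ℝ, (∀ j, 0 ≤ q j) ∧ (∀ j ∉ C.cols, q j = 0) ∧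
    (∑ j ∈ C.cols, q j) = 1 ∧ (∑ j ∈ C.cols, q j * Real.log (C.colCount j)) = t ∧
    h = -∑ j ∈ C.cols, q j * Real.log (q j) }

/-- A probability vector on the nonempty columns. -/
def IsProbVec (p : Fin C.m → ℝ) : Prop :=
  (∀ j, 0 ≤ p j) ∧ (∀ j ∉ C.cols, p j = 0) ∧ (∑ j ∈ C.cols, p j) = 1

/-- `∑_ĵ p_ĵ log N_ĵ`. -/
def colAvg (p : Fin C.m → ℝ) : ℝ := ∑ j ∈ C.cols, p j * Real.log (C.colCount j)

/-- The relative entropy `H(p‖P)` where `P = (N_1/N, …, N_M/N)`. -/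
def relEntP (p : Fin C.m → ℝ) : ℝ :=
  ∑ j ∈ C.cols, p j * Real.log (p j / ((C.colCount j : ℝ) / (C.N : ℝ)))

/-- The relative entropy `H(p‖Q)` where `Q = (1/M, …, 1/M)`. -/
def relEntQ (p : Fin C.m → ℝ) : ℝ :=
  ∑ j ∈ C.cols, p j * Real.log (p j / (1 / (C.M : ℝ)))

/-- The function `β(ξ)` of the multifractal spectrum of the uniform self-affine measure. -/
def beta (ξ : ℝ) : ℝ :=
  (1 / Real.log C.m) * (-(ξ * Real.log C.N) +
    Real.log (∑ j ∈ C.cols, (C.colCount j : ℝ) ^ (C.gamma⁻¹ + (1 - C.gamma⁻¹) * ξ)))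

/-- `f(α) = inf_ξ (αξ + β(ξ))`. -/
def fspec (α : ℝ) : ℝ := ⨅ ξ : ℝ, (α * ξ + C.beta ξ)

end BMData

/-- The lower `θ`-intermediate dimension of a set in a metric space. -/
def lowerInterDim {X : Type*} [MetricSpace X] (θ : ℝ) (F : Set X) : ℝ :=
  sInf { s : ℝ | 0 ≤ s ∧ ∀ ε > 0, ∀ δ₀ > 0, ∃ δ : ℝ, 0 < δ ∧ δ ≤ δ₀ ∧
    ∃ 𝒰 : Set (Set X), 𝒰.Countable ∧ F ⊆ ⋃₀ 𝒰 ∧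
      (∀ U ∈ 𝒰, δ ^ (1 / θ) ≤ Metric.diam U ∧ Metric.diam U ≤ δ) ∧
      (∑' U : 𝒰, ENNReal.ofReal (Metric.diam (U : Set X) ^ s)) ≤ ENNReal.ofReal ε }

/-- The upper `θ`-intermediate dimension of a set in a metric space. -/
def upperInterDim {X : Type*} [MetricSpace X] (θ : ℝ) (F : Set X) : ℝ :=
  sInf { s : ℝ | 0 ≤ s ∧ ∀ ε > 0, ∃ δ₀ > 0, ∀ δ : ℝ, 0 < δ → δ ≤ δ₀ →
    ∃ 𝒰 : Set (Set X), 𝒰.Countable ∧ F ⊆ ⋃₀ 𝒰 ∧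
      (∀ U ∈ 𝒰, δ ^ (1 / θ) ≤ Metric.diam U ∧ Metric.diam U ≤ δ) ∧
      (∑' U : 𝒰, ENNReal.ofReal (Metric.diam (U : Set X) ^ s)) ≤ ENNReal.ofReal ε }

/-- The topological support of a Borel measure: the set of points all of whose
neighbourhoods have positive measure. -/
def measSupport {X : Type*} [MetricSpace X] [MeasurableSpace X] (μ : Measure X) : Set X :=
  { x | ∀ r : ℝ, 0 < r → 0 < μ (Metric.ball x r) }

/-- `S^s_{δ,θ}(F)`: the infimal `s`-cost of a countable cover of `F` by sets of diameter
between `δ^{1/θ}` and `δ`. -/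
def interCost {X : Type*} [MetricSpace X] (F : Set X) (θ s δ : ℝ) : ℝ≥0∞ :=
  sInf { c : ℝ≥0∞ | ∃ 𝒰 : Set (Set X), 𝒰.Countable ∧ F ⊆ ⋃₀ 𝒰 ∧
    (∀ U ∈ 𝒰, δ ^ (1 / θ) ≤ Metric.diam U ∧ Metric.diam U ≤ δ) ∧
    c = ∑' U : 𝒰, ENNReal.ofReal (Metric.diam (U : Set X) ^ s) }

/-!
With `a_ĵ = log N_ĵ`, the condition `ψ_{ī|J}(s) > 1` says exactly `∑_ℓ a_{i_ℓ} > J t`, so we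
count words whose empirical mean of `a` exceeds `t`: a finite-alphabet Cramér theorem. For every
`λ ≥ 0` the Chernoff bound gives `#{…} ≤ exp (J (log Z(λ) − λ t))`, where `Z(λ) = ∑ e^{λ a_ĵ}`.
Conversely, under the tilted distribution `e^{λ a_ĵ} / Z(λ)` with mean just above `t`, a
second-moment estimate puts half of the mass on counted words of weight about
`exp (−J (log Z(λ) − λ t))`. At the `λ` whose tilted mean is exactly `t` (it exists since
`t̲ < t < max a_ĵ`) both exponents agree, and Gibbs' inequality identifies `log Z(λ) − λ t`
with `H(Q*_t)`.
-/

namespace Cramer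

open Finset Real Filter Topology

variable {ι : Type*} [Fintype ι]

def partitionFn (a : ι → ℝ) (l : ℝ) : ℝ := ∑ j, exp (l * a j)

def gibbsWeight (a : ι → ℝ) (l : ℝ) (j : ι) : ℝ := exp (l * a j) / partitionFn a l

def gibbsMean (a : ι → ℝ) (l : ℝ) : ℝ := ∑ j, gibbsWeight a l j * a j

def countAbove (a : ι → ℝ) (t : ℝ) (J : ℕ) : ℕ := #{w : Fin J → ι | J * t < ∑ i, a (w i)}

section Moments

variable (p c : ι → ℝ)

theorem sum_prod_mul_mul_eq (hp : ∑ j, p j = 1) (hc : ∑ j, p j * c j = 0) {J : ℕ}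
    (i k : Fin J) :
    ∑ w : Fin J → ι, (∏ l, p (w l)) * (c (w i) * c (w k)) =
      if i = k then ∑ j, p j * c j ^ 2 else 0 := by
  have hfactor : ∀ w : Fin J → ι, (∏ l, p (w l)) * (c (w i) * c (w k)) =
      ∏ l, p (w l) * (if l = i then c (w l) else 1) * (if l = k then c (w l) else 1) := by
    intro w
    simp only [prod_mul_distrib, Fintype.prod_ite_eq', mul_assoc]
  simp_rw [hfactor]
  rw [← Fintype.prod_sum fun l j => p j * (if l = i then c j else 1) * (if l = k then c j else 1)]
  split_ifs with hik
  · subst hik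
    rw [prod_eq_single i (fun l _ hl => by simp [hl, hp]) (by simp)]
    simp [sq, mul_assoc]
  · exact prod_eq_zero (mem_univ i) (by simp [hik, hc])

theorem sum_prod_mul_sq_sum (hp : ∑ j, p j = 1) (hc : ∑ j, p j * c j = 0) (J : ℕ) :
    ∑ w : Fin J → ι, (∏ l, p (w l)) * (∑ i, c (w i)) ^ 2 = J * ∑ j, p j * c j ^ 2 :=
  calc ∑ w : Fin J → ι, (∏ l, p (w l)) * (∑ i, c (w i)) ^ 2
      = ∑ i, ∑ k, ∑ w : Fin J → ι, (∏ l, p (w l)) * (c (w i) * c (w k)) := by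
        simp_rw [sq, sum_mul_sum, mul_sum]
        rw [sum_comm]
        exact sum_congr rfl fun i _ => sum_comm
    _ = J * ∑ j, p j * c j ^ 2 := by simp [sum_prod_mul_mul_eq p c hp hc]

/-- A weak law of large numbers for words drawn letter by letter from the distribution `p`. -/
theorem eventually_half_le_sum_prod_filter (hp0 : ∀ j, 0 ≤ p j) (hp : ∑ j, p j = 1)
    (hc : ∑ j, p j * c j = 0) {r : ℝ} (hr : 0 < r) :
    ∀ᶠ J : ℕ in atTop,
      1 / 2 ≤ ∑ w : Fin J → ι with |∑ i, c (w i)| < J * r, ∏ l, p (w l) := by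
  set v := ∑ j, p j * c j ^ 2
  filter_upwards [eventually_gt_atTop 0,
    tendsto_natCast_atTop_atTop.eventually_ge_atTop (2 * v / r ^ 2)] with J hJ0 hJ
  have hJr : 0 < (J : ℝ) * r := by positivity
  have hP : ∀ w : Fin J → ι, 0 ≤ ∏ l, p (w l) := fun w => prod_nonneg fun l _ => hp0 _
  have hbad : ∑ w : Fin J → ι with ¬|∑ i, c (w i)| < J * r, ∏ l, p (w l) ≤ 1 / 2 :=
    calc ∑ w : Fin J → ι with ¬|∑ i, c (w i)| < J * r, ∏ l, p (w l)
        ≤ ∑ w : Fin J → ι with ¬|∑ i, c (w i)| < J * r,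
            (∏ l, p (w l)) * (∑ i, c (w i)) ^ 2 / (J * r) ^ 2 := by
          refine sum_le_sum fun w hw => ?_
          rw [le_div_iff₀ (by positivity)]
          have hle : (J * r) ^ 2 ≤ (∑ i, c (w i)) ^ 2 := by
            rw [← sq_abs (∑ i, c (w i))]
            exact pow_le_pow_left₀ hJr.le (not_lt.1 (mem_filter.1 hw).2) 2
          exact mul_le_mul_of_nonneg_left hle (hP w)
      _ ≤ ∑ w : Fin J → ι, (∏ l, p (w l)) * (∑ i, c (w i)) ^ 2 / (J * r) ^ 2 :=
          sum_le_sum_of_subset_of_nonneg (filter_subset _ _) fun w _ _ => by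
            have := hP w
            positivity
      _ = J * v / (J * r) ^ 2 := by rw [← sum_div, sum_prod_mul_sq_sum p c hp hc]
      _ ≤ 1 / 2 := by
          rw [div_le_iff₀ (by positivity)]
          rw [div_le_iff₀ (by positivity)] at hJ
          nlinarith
  have htotal : ∑ w : Fin J → ι, ∏ l, p (w l) = 1 := by rw [← Fintype.sum_pow, hp, one_pow]
  rw [← sum_filter_add_sum_filter_not univ fun w : Fin J → ι => |∑ i, c (w i)| < J * r] at htotal
  linarith

end Moments

section Gibbs

variable (a : ι → ℝ)

theorem continuous_partitionFn : Continuous (partitionFn a) := by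
  unfold partitionFn
  fun_prop

theorem prod_gibbsWeight (l : ℝ) {J : ℕ} (w : Fin J → ι) :
    ∏ i, gibbsWeight a l (w i) = exp (l * ∑ i, a (w i)) / partitionFn a l ^ J := by
  simp only [gibbsWeight, prod_div_distrib, prod_const, card_univ, Fintype.card_fin, mul_sum,
    exp_sum]

theorem gibbsMean_zero : gibbsMean a 0 = (∑ j, a j) / Fintype.card ι := by
  simp [gibbsMean, gibbsWeight, partitionFn, div_eq_inv_mul, mul_sum]

variable [Nonempty ι]

theorem partitionFn_pos (l : ℝ) : 0 < partitionFn a l :=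
  sum_pos (fun _ _ => exp_pos _) univ_nonempty

theorem gibbsWeight_pos (l : ℝ) (j : ι) : 0 < gibbsWeight a l j :=
  div_pos (exp_pos _) (partitionFn_pos a l)

theorem sum_gibbsWeight (l : ℝ) : ∑ j, gibbsWeight a l j = 1 := by
  simp only [gibbsWeight, ← sum_div]
  exact div_self (partitionFn_pos a l).ne'

theorem continuous_gibbsMean : Continuous (gibbsMean a) := by
  have := continuous_partitionFn a
  have hne : ∀ l, partitionFn a l ≠ 0 := fun l => (partitionFn_pos a l).ne'
  unfold gibbsMean gibbsWeight
  fun_prop (disch := exact hne _)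

theorem gibbsMean_sub (l t : ℝ) : gibbsMean a l - t = ∑ j, gibbsWeight a l j * (a j - t) := by
  simp only [gibbsMean, mul_sub, sum_sub_distrib, ← sum_mul, sum_gibbsWeight, one_mul]

theorem mul_le_log_partitionFn (l : ℝ) (j : ι) : l * a j ≤ log (partitionFn a l) := by
  rw [le_log_iff_exp_le (partitionFn_pos a l)]
  exact single_le_sum (f := fun j => exp (l * a j)) (fun j _ => (exp_pos _).le) (mem_univ j)

theorem exists_lt_gibbsMean {t : ℝ} {j₀ : ι} (hj₀ : t < a j₀) :
    ∃ l, 0 ≤ l ∧ t < gibbsMean a l := by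
  set d := a j₀ - t
  have hd : 0 < d := sub_pos.2 hj₀
  -- from `e^x ≥ 1 + x` when `y ≥ 0`, and from `e^{ly} ≤ 1` when `y < 0`
  have hterm : ∀ {l : ℝ}, 0 ≤ l → ∀ y : ℝ, y + l * max y 0 ^ 2 ≤ y * exp (l * y) := by
    intro l hl y
    rcases le_or_gt 0 y with hy | hy
    · rw [max_eq_left hy]
      nlinarith [add_one_le_exp (l * y), mul_le_mul_of_nonneg_left (add_one_le_exp (l * y)) hy]
    · rw [max_eq_right hy.le]
      have : exp (l * y) ≤ 1 := exp_le_one_iff.2 (mul_nonpos_of_nonneg_of_nonpos hl hy.le)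
      nlinarith
  have hweight : ∀ l j,
      gibbsWeight a l j = exp (l * t) / partitionFn a l * exp (l * (a j - t)) :=
    fun l j => by rw [gibbsWeight, div_mul_eq_mul_div, ← exp_add]; congr 2; ring
  set l := (|∑ j, (a j - t)| + 1) / d ^ 2
  have hl : 0 ≤ l := by positivity
  refine ⟨l, hl, sub_pos.1 ?_⟩
  have hsum : 0 < ∑ j, (a j - t) * exp (l * (a j - t)) :=
    calc 0 < ∑ j, (a j - t) + l * d ^ 2 := by
          have : l * d ^ 2 = |∑ j, (a j - t)| + 1 := div_mul_cancel₀ _ (by positivity)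
          linarith [neg_abs_le (∑ j, (a j - t))]
      _ ≤ ∑ j, (a j - t) + l * ∑ j, max (a j - t) 0 ^ 2 := by
          gcongr
          calc d ^ 2 = max (a j₀ - t) 0 ^ 2 := by rw [max_eq_left hd.le]
            _ ≤ _ := single_le_sum (f := fun j => max (a j - t) 0 ^ 2)
                (fun _ _ => sq_nonneg _) (mem_univ j₀)
      _ ≤ ∑ j, (a j - t) * exp (l * (a j - t)) := by
          rw [mul_sum, ← sum_add_distrib]
          exact sum_le_sum fun j _ => hterm hl _
  rw [gibbsMean_sub]
  simp_rw [hweight, mul_assoc, ← mul_sum]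
  exact mul_pos (div_pos (exp_pos _) (partitionFn_pos a l)) (by simpa [mul_comm] using hsum)

end Gibbs

section LargeDeviations

variable [Nonempty ι] (a : ι → ℝ) (t : ℝ)

theorem exists_gibbsMean_eq_mem_closure (hlow : gibbsMean a 0 < t) {j₀ : ι}
    (hj₀ : t < a j₀) :
    ∃ l, 0 ≤ l ∧ gibbsMean a l = t ∧ l ∈ closure {l | 0 ≤ l ∧ t < gibbsMean a l} := by
  set S := {l | 0 ≤ l ∧ t < gibbsMean a l}
  have hS : S.Nonempty := exists_lt_gibbsMean a hj₀
  have hbdd : BddBelow S := ⟨0, fun _ hl => hl.1⟩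
  have hcont := continuous_gibbsMean a
  have hcl : sInf S ∈ closure S := csInf_mem_closure hS hbdd
  have h0 : 0 ≤ sInf S := le_csInf hS fun _ hl => hl.1
  have hge : t ≤ gibbsMean a (sInf S) :=
    closure_minimal (fun _ hl => hl.2.le) (isClosed_le continuous_const hcont) hcl
  refine ⟨sInf S, h0, le_antisymm ?_ hge, hcl⟩
  by_contra! hlt
  have hpos : 0 < sInf S := h0.lt_of_ne fun h => by rw [← h] at hlt; linarith
  -- otherwise points just below `sInf S` would still lie in `S`
  obtain ⟨l, ⟨hl0, hlS⟩, hl⟩ := (Eventually.and (Ioo_mem_nhdsLT hpos)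
    (nhdsWithin_le_nhds (hcont.continuousAt.eventually (lt_mem_nhds hlt)))).exists
  exact (csInf_le hbdd ⟨hl0.le, hl⟩).not_gt hlS

theorem countAbove_le_exp {l : ℝ} (hl : 0 ≤ l) (J : ℕ) :
    (countAbove a t J : ℝ) ≤ exp (J * (log (partitionFn a l) - l * t)) := by
  have hZ := partitionFn_pos a l
  have key : (countAbove a t J : ℝ) * exp (J * (l * t)) ≤ partitionFn a l ^ J :=
    calc (countAbove a t J : ℝ) * exp (J * (l * t))
        = ∑ w : Fin J → ι with J * t < ∑ i, a (w i), exp (J * (l * t)) := by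
          rw [sum_const, nsmul_eq_mul, countAbove]
      _ ≤ ∑ w : Fin J → ι with J * t < ∑ i, a (w i), exp (l * ∑ i, a (w i)) := by
          refine sum_le_sum fun w hw => exp_le_exp.2 ?_
          have := mul_le_mul_of_nonneg_left (mem_filter.1 hw).2.le hl
          linarith
      _ ≤ ∑ w : Fin J → ι, exp (l * ∑ i, a (w i)) :=
          sum_le_sum_of_subset_of_nonneg (filter_subset _ _) fun _ _ _ => (exp_pos _).le
      _ = partitionFn a l ^ J := by
          rw [partitionFn, Fintype.sum_pow]
          simp_rw [mul_sum, exp_sum]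
  rw [mul_sub, exp_sub, exp_nat_mul, exp_log hZ, le_div_iff₀ (exp_pos _)]
  exact key

theorem log_countAbove_div_le {l : ℝ} (hl : 0 ≤ l)
    (hE : 0 ≤ log (partitionFn a l) - l * t) (J : ℕ) :
    1 / (J : ℝ) * log (countAbove a t J) ≤ log (partitionFn a l) - l * t := by
  rcases Nat.eq_zero_or_pos (countAbove a t J) with h | h
  · simpa [h] using hE
  rcases J.eq_zero_or_pos with rfl | hJ
  · simpa using hE
  rw [one_div_mul_eq_div, div_le_iff₀' (by positivity), ← log_exp (J * _)]
  exact log_le_log (by positivity) (countAbove_le_exp a t hl J)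

/-- Lower bound by tilting: under the Gibbs weights at `l`, a typical word has letter sum
within `J δ` of `J · gibbsMean a l`, hence is counted and has weight at most
`exp (l J (gibbsMean a l + δ)) / partitionFn a l ^ J`. -/
theorem eventually_half_le_countAbove_mul {l : ℝ} (hl : 0 ≤ l) (ht : t < gibbsMean a l)
    {δ : ℝ} (hδ : 0 < δ) :
    ∀ᶠ J : ℕ in atTop, 1 / 2 ≤
      countAbove a t J * (exp (J * (l * (gibbsMean a l + δ))) / partitionFn a l ^ J) := by
  set μ := gibbsMean a l
  set Z := partitionFn a l
  have hZ : 0 < Z := partitionFn_pos a l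
  have hc : ∑ j, gibbsWeight a l j * (a j - μ) = 0 := by rw [← gibbsMean_sub, sub_self]
  filter_upwards [eventually_half_le_sum_prod_filter (gibbsWeight a l) (fun j => a j - μ)
    (fun j => (gibbsWeight_pos a l j).le) (sum_gibbsWeight a l) hc
    (lt_min (sub_pos.2 ht) hδ)] with J hJ
  set G : Finset (Fin J → ι) := {w | |∑ i, (a (w i) - μ)| < J * min (μ - t) δ}
  have hsum : ∀ w : Fin J → ι, ∑ i, (a (w i) - μ) = ∑ i, a (w i) - J * μ := fun w => by
    simp [sum_sub_distrib]
  have hbounds : ∀ w ∈ G, J * t < ∑ i, a (w i) ∧ ∑ i, a (w i) ≤ J * (μ + δ) := by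
    intro w hw
    simp only [G, mem_filter_univ, hsum, abs_lt] at hw
    have h1 : (J : ℝ) * min (μ - t) δ ≤ J * (μ - t) := by gcongr; exact min_le_left _ _
    have h2 : (J : ℝ) * min (μ - t) δ ≤ J * δ := by gcongr; exact min_le_right _ _
    constructor <;> nlinarith
  calc (1 : ℝ) / 2 ≤ ∑ w ∈ G, ∏ i, gibbsWeight a l (w i) := hJ
    _ ≤ ∑ w ∈ G, exp (J * (l * (μ + δ))) / Z ^ J := by
        refine sum_le_sum fun w hw => ?_
        rw [prod_gibbsWeight]
        refine div_le_div_of_nonneg_right (exp_le_exp.2 ?_) (pow_pos hZ J).le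
        have := mul_le_mul_of_nonneg_left (hbounds w hw).2 hl
        linarith
    _ = G.card * (exp (J * (l * (μ + δ))) / Z ^ J) := by rw [sum_const, nsmul_eq_mul]
    _ ≤ countAbove a t J * (exp (J * (l * (μ + δ))) / Z ^ J) := by
        gcongr
        exact card_le_card fun w hw => mem_filter.2 ⟨mem_univ w, (hbounds w hw).1⟩

theorem eventually_le_log_countAbove {l : ℝ} (hl : 0 ≤ l) (ht : t < gibbsMean a l) {δ : ℝ}
    (hδ : 0 < δ) :
    ∀ᶠ J : ℕ in atTop,
      J * (log (partitionFn a l) - l * (gibbsMean a l + δ)) - log 2 ≤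
        log (countAbove a t J) := by
  have hZ := partitionFn_pos a l
  filter_upwards [eventually_half_le_countAbove_mul a t hl ht hδ] with J hmass
  have hcnt : (0 : ℝ) < countAbove a t J := by
    by_contra! h
    rw [le_antisymm h (Nat.cast_nonneg _), zero_mul] at hmass
    norm_num at hmass
  rw [le_log_iff_exp_le hcnt, exp_sub, mul_sub, exp_sub, exp_nat_mul, exp_log hZ, exp_log two_pos,
    div_div, div_le_iff₀ (by positivity)]
  rw [mul_div_assoc', le_div_iff₀ (pow_pos hZ J)] at hmass
  linarith

theorem eventually_lt_log_countAbove_div {l : ℝ} (hl : 0 ≤ l) (ht : t < gibbsMean a l) {b : ℝ}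
    (hb : b < log (partitionFn a l) - l * gibbsMean a l) :
    ∀ᶠ J : ℕ in atTop, b < 1 / (J : ℝ) * log (countAbove a t J) := by
  set g := log (partitionFn a l) - l * gibbsMean a l - b
  have hg : 0 < g := sub_pos.2 hb
  set δ := g / (2 * (l + 1))
  have hδ : 0 < δ := by positivity
  have hlδ : l * δ < g / 2 := by
    rw [mul_div_assoc', div_lt_div_iff₀ (by positivity) two_pos]
    nlinarith
  filter_upwards [eventually_le_log_countAbove a t hl ht hδ,
    (tendsto_const_div_atTop_nhds_zero_nat (log 2)).eventually (gt_mem_nhds (half_pos hg)),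
    eventually_gt_atTop 0] with J hJ hlog2 hJ0
  have hJ0' : (0 : ℝ) < J := Nat.cast_pos.2 hJ0
  rw [div_lt_iff₀ hJ0'] at hlog2
  rw [one_div_mul_eq_div, lt_div_iff₀ hJ0']
  nlinarith [mul_lt_mul_of_pos_left hlδ hJ0']

theorem tendsto_log_countAbove (hlow : (∑ j, a j) / Fintype.card ι < t) {j₀ : ι}
    (hj₀ : t < a j₀) :
    ∃ l, gibbsMean a l = t ∧
      Tendsto (fun J : ℕ => 1 / (J : ℝ) * log (countAbove a t J)) atTop
        (𝓝 (log (partitionFn a l) - l * t)) := by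
  obtain ⟨l, hl, hμ, hcl⟩ :=
    exists_gibbsMean_eq_mem_closure a t (by rwa [gibbsMean_zero]) hj₀
  have hE : 0 ≤ log (partitionFn a l) - l * t := by
    nlinarith [mul_le_log_partitionFn a l j₀, mul_le_mul_of_nonneg_left hj₀.le hl]
  refine ⟨l, hμ, tendsto_order.2 ⟨fun b hb => ?_, fun b hb => ?_⟩⟩
  · have hφ : Continuous fun l => log (partitionFn a l) - l * gibbsMean a l :=
      ((continuous_partitionFn a).log fun l => (partitionFn_pos a l).ne').sub
        (continuous_id.mul (continuous_gibbsMean a))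
    have hnhds : {l | b < log (partitionFn a l) - l * gibbsMean a l} ∈ 𝓝 l :=
      (isOpen_lt continuous_const hφ).mem_nhds (by simpa [hμ] using hb)
    obtain ⟨l', hb', hl', ht'⟩ := mem_closure_iff_nhds.1 hcl _ hnhds
    exact eventually_lt_log_countAbove_div a t hl' ht' hb'
  · exact Eventually.of_forall fun J => (log_countAbove_div_le a t hl hE J).trans_lt hb

end LargeDeviations

end Cramer

theorem sum_mul_log_le_sum_mul_log {α : Type*} {s : Finset α} {p q : α → ℝ}
    (hq : ∀ j ∈ s, 0 ≤ q j) (hp : ∀ j ∈ s, 0 < p j)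
    (hsum : ∑ j ∈ s, p j ≤ ∑ j ∈ s, q j) :
    ∑ j ∈ s, q j * Real.log (p j) ≤ ∑ j ∈ s, q j * Real.log (q j) := by
  have hterm : ∀ j ∈ s, q j * Real.log (p j) - q j * Real.log (q j) ≤ p j - q j := by
    intro j hj
    rcases (hq j hj).eq_or_lt with h | h
    · simp [← h, (hp j hj).le]
    · have hlog := Real.log_le_sub_one_of_pos (div_pos (hp j hj) h)
      rw [Real.log_div (hp j hj).ne' h.ne'] at hlog
      calc q j * Real.log (p j) - q j * Real.log (q j)
          = q j * (Real.log (p j) - Real.log (q j)) := by ring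
        _ ≤ q j * (p j / q j - 1) := mul_le_mul_of_nonneg_left hlog h.le
        _ = p j - q j := by field_simp
  have := Finset.sum_le_sum hterm
  rw [Finset.sum_sub_distrib, Finset.sum_sub_distrib] at this
  linarith

namespace BMData

open Finset Real Cramer

variable (C : BMData)

theorem cols_nonempty : C.cols.Nonempty :=
  card_pos.1 (zero_lt_one.trans C.one_lt_cols)

instance : Nonempty {c // c ∈ C.cols} := C.cols_nonempty.coe_sort

theorem colCount_pos {c : Fin C.m} (hc : c ∈ C.cols) : 0 < C.colCount c := by
  obtain ⟨p, hp, rfl⟩ := mem_image.1 hc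
  exact card_pos.2 ⟨p, mem_filter.2 ⟨hp, rfl⟩⟩

theorem one_lt_m : 1 < (C.m : ℝ) := by exact_mod_cast one_lt_two.trans_le C.two_le_m

theorem one_lt_n : 1 < (C.n : ℝ) := by
  exact_mod_cast (one_lt_two.trans_le C.two_le_m).trans C.m_lt_n

def colLog (j : {c // c ∈ C.cols}) : ℝ := Real.log (C.colCount j.1)

theorem one_lt_psi_iff {t s : ℝ} (hs : s = t / log C.n + log C.M / log C.m) {J : ℕ}
    (w : Fin J → {c // c ∈ C.cols}) :
    1 < C.psi s w J ↔ J * t < ∑ i, C.colLog (w i) := by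
  have hM : (0 : ℝ) < C.M := by exact_mod_cast zero_lt_one.trans C.one_lt_cols
  have hn : (0 : ℝ) < C.n := zero_lt_one.trans C.one_lt_n
  have hN : ∀ i, (0 : ℝ) < C.colCount (w i).1 := fun i => by
    exact_mod_cast C.colCount_pos (w i).2
  have hpsi : C.psi s w J =
      C.M ^ ((J : ℝ) * C.gamma) * C.n ^ (-(s * J)) * ∏ i, (C.colCount (w i).1 : ℝ) := by
    rw [psi, filter_true_of_mem fun l _ => l.isLt]
  have hlog : log (C.psi s w J) = ∑ i, C.colLog (w i) - J * t := by
    rw [hpsi, log_mul (by positivity) (prod_pos fun i _ => hN i).ne',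
      log_mul (by positivity) (by positivity), log_rpow hM, log_rpow hn,
      log_prod fun i _ => (hN i).ne', gamma, hs]
    field_simp [(log_pos C.one_lt_m).ne', (log_pos C.one_lt_n).ne']
    simp only [colLog]
    ring
  rw [← log_pos_iff (by rw [hpsi]; positivity), hlog, sub_pos]

theorem card_one_lt_psi {t s : ℝ} (hs : s = t / log C.n + log C.M / log C.m) (J : ℕ) :
    Nat.card {w : Fin J → {c // c ∈ C.cols} // 1 < C.psi s w J} = countAbove C.colLog t J := by
  rw [Nat.card_eq_fintype_card, Fintype.card_subtype, countAbove]
  simp_rw [C.one_lt_psi_iff hs]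

/-- The maximiser is the Gibbs distribution with mean `t`; its optimality is Gibbs' inequality. -/
theorem entMax_eq {l t : ℝ} (hl : gibbsMean C.colLog l = t) :
    C.entMax t = log (partitionFn C.colLog l) - l * t := by
  set Z := partitionFn C.colLog l
  have hZ : 0 < Z := partitionFn_pos _ l
  set p : Fin C.m → ℝ := fun j => exp (l * log (C.colCount j)) / Z
  have hp : ∀ j, 0 < p j := fun j => div_pos (exp_pos _) hZ
  have hcoe : ∀ f : Fin C.m → ℝ, ∑ j ∈ C.cols, f j = ∑ j : {c // c ∈ C.cols}, f j :=
    fun f => (sum_coe_sort C.cols f).symm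
  have hpsum : ∑ j ∈ C.cols, p j = 1 := by
    rw [hcoe]
    exact sum_gibbsWeight _ l
  have hpt : ∑ j ∈ C.cols, p j * log (C.colCount j) = t := by
    rw [hcoe]
    exact hl
  have hcross : ∀ q : Fin C.m → ℝ, ∑ j ∈ C.cols, q j = 1 →
      ∑ j ∈ C.cols, q j * log (C.colCount j) = t →
      ∑ j ∈ C.cols, q j * log (p j) = l * t - log Z := by
    intro q hq1 hqt
    simp_rw [p, log_div (exp_pos _).ne' hZ.ne', log_exp, mul_sub, sum_sub_distrib, ← sum_mul,
      hq1, mul_left_comm _ l, ← mul_sum, hqt, one_mul]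
  set q : Fin C.m → ℝ := fun j => if j ∈ C.cols then p j else 0
  have hq : ∀ f : ℝ → ℝ → ℝ, ∑ j ∈ C.cols, f (q j) (log (C.colCount j)) =
      ∑ j ∈ C.cols, f (p j) (log (C.colCount j)) :=
    fun f => sum_congr rfl fun j hj => by simp only [q, if_pos hj]
  rw [entMax]
  refine IsGreatest.csSup_eq ⟨⟨q, fun j => ?_, fun j hj => if_neg hj, ?_, ?_, ?_⟩, ?_⟩
  · by_cases hj : j ∈ C.cols
    · simpa only [q, if_pos hj] using (hp j).le
    · simp only [q, if_neg hj, le_rfl]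
  · simpa only using (hq fun x _ => x).trans hpsum
  · simpa only using (hq fun x y => x * y).trans hpt
  · rw [(hq fun x _ => x * log x), hcross p hpsum hpt]
    ring
  · rintro h ⟨q, hq0, -, hq1, hqt, rfl⟩
    have := sum_mul_log_le_sum_mul_log (fun j _ => hq0 j) (fun j _ => hp j)
      (hpsum.trans hq1.symm).le
    rw [hcross q hq1 hqt] at this
    linarith

end BMData

theorem statement15_general (C : BMData) (t s : ℝ)
    (ht1 : C.tLow < t)
    (ht2 : t < ⨆ j : {c // c ∈ C.cols}, Real.log (C.colCount j.1))
    (hs : s = t / Real.log C.n + Real.log C.M / Real.log C.m) :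
    Filter.Tendsto (fun J : ℕ => (1 / (J : ℝ)) * Real.log
        (Nat.card {w : Fin J → {c // c ∈ C.cols} // 1 < C.psi s w J}))
      Filter.atTop (nhds (C.entMax t)) := by
  obtain ⟨j₀, hj₀⟩ : ∃ j, t < C.colLog j := exists_lt_of_lt_ciSup ht2
  have hlow : (∑ j, C.colLog j) / Fintype.card {c // c ∈ C.cols} < t := by
    rw [Fintype.card_coe, div_eq_inv_mul, ← one_div]
    exact (Finset.sum_coe_sort C.cols fun j => Real.log (C.colCount j)).symm ▸ ht1
  obtain ⟨l, hl, hlim⟩ := Cramer.tendsto_log_countAbove C.colLog t hlow hj₀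
  rw [C.entMax_eq hl]
  simpa only [C.card_one_lt_psi hs] using hlim

/-- **Lemma (counting words with `ψ_{ī|J}(s) > 1`).** For `t ∈ (t̲, max_ĵ log N_ĵ)` and
`s = t/log n + log M/log m`, the exponential growth rate of
`#{ī ∈ {1,…,M}^J : ψ_{ī|J}(s) > 1}` is `H(Q*_t)`. -/
theorem statement15 (C : BMData) (hnu : C.NonUniform) (t s : ℝ)
    (ht1 : C.tLow < t)
    (ht2 : t < ⨆ j : {c // c ∈ C.cols}, Real.log (C.colCount j.1))
    (hs : s = t / Real.log C.n + Real.log C.M / Real.log C.m) :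
    Filter.Tendsto (fun J : ℕ => (1 / (J : ℝ)) * Real.log
        (Nat.card {w : Fin J → {c // c ∈ C.cols} // 1 < C.psi s w J}))
      Filter.atTop (nhds (C.entMax t)) :=
  statement15_general C t s ht1 ht2 hs
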